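/- Let M ≥ 1 be an integer, D ≥ 0, and let y, y', z ∈ ℝ^M satisfy, for every coordinate i, y_i ≤ z_i, y'_i ≤ z_i, z_i − min(y_i, y'_i) ≤ D. Let U ⊆ ℝ^M be any Lebesgue-measurable set with finite Lebesgue measure. Then |λ(U ∪ [y,z]) − λ(U ∪ [y',z])| ≤ D^{M−1} · ∑_{i=1}^M |y_i − y'_i|, where λ denotes M-dimensional Lebesgue measure and [y,z] = ∏_i [y_i, z_i]. -/
import Mathlib

open MeasureTheory Finset

/-- Telescoping bound on difference of products. -/
lemma prod_sub_prod_le_aux {ι : Type*} [DecidableEq ι] (D : ℝ) (hD : 0 ≤ D)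
    (f g : ι → ℝ) (hg0 : ∀ i, 0 ≤ g i) (hgf : ∀ i, g i ≤ f i) (hfD : ∀ i, f i ≤ D)
    (s : Finset ι) (hs : s.Nonempty) :
    ∏ i ∈ s, f i - ∏ i ∈ s, g i ≤ D ^ (s.card - 1) * ∑ i ∈ s, (f i - g i) := by
  induction hs using Finset.Nonempty.cons_induction with
  | singleton a => simp
  | cons a s ha hs IH =>
    have hf0 : ∀ i, 0 ≤ f i := fun i => le_trans (hg0 i) (hgf i)
    rw [Finset.prod_cons, Finset.prod_cons, Finset.sum_cons, Finset.card_cons]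
    have hcard : s.card + 1 - 1 = s.card := rfl
    rw [hcard]
    have h1 : ∏ i ∈ s, f i ≤ D ^ s.card := by
      calc ∏ i ∈ s, f i ≤ ∏ i ∈ s, D := Finset.prod_le_prod (fun i _ => hf0 i) (fun i _ => hfD i)
        _ = D ^ s.card := by rw [Finset.prod_const]
    have hprodg0 : 0 ≤ ∏ i ∈ s, g i := Finset.prod_nonneg (fun i _ => hg0 i)
    have hprodfg : ∏ i ∈ s, g i ≤ ∏ i ∈ s, f i :=
      Finset.prod_le_prod (fun i _ => hg0 i) (fun i _ => hgf i)
    have key : f a * ∏ i ∈ s, f i - g a * ∏ i ∈ s, g i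
        = (f a - g a) * ∏ i ∈ s, f i + g a * (∏ i ∈ s, f i - ∏ i ∈ s, g i) := by ring
    rw [key]
    have hb1 : (f a - g a) * ∏ i ∈ s, f i ≤ (f a - g a) * D ^ s.card :=
      mul_le_mul_of_nonneg_left h1 (sub_nonneg.2 (hgf a))
    have hb2 : g a * (∏ i ∈ s, f i - ∏ i ∈ s, g i)
        ≤ D * (D ^ (s.card - 1) * ∑ i ∈ s, (f i - g i)) := by
      apply mul_le_mul (le_trans (hgf a) (hfD a)) IH (sub_nonneg.2 hprodfg) hD
    have hDpow : D * D ^ (s.card - 1) = D ^ s.card := by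
      rw [← pow_succ']
      congr 1
      have hpos : 1 ≤ s.card := hs.card_pos
      omega
    calc (f a - g a) * ∏ i ∈ s, f i + g a * (∏ i ∈ s, f i - ∏ i ∈ s, g i)
        ≤ (f a - g a) * D ^ s.card + D * (D ^ (s.card - 1) * ∑ i ∈ s, (f i - g i)) :=
          add_le_add hb1 hb2
      _ = D ^ s.card * ((f a - g a) + ∑ i ∈ s, (f i - g i)) := by
          rw [← mul_assoc, hDpow]; ring

/-- One-sided version of the hypervolume Lipschitz bound. -/
lemma hypervolume_lipschitz_one_side
    (M : ℕ) (hM : 1 ≤ M) (D : ℝ) (hD : 0 ≤ D)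
    (y y' z : Fin M → ℝ)
    (hy : ∀ i, y i ≤ z i) (hy' : ∀ i, y' i ≤ z i)
    (hside : ∀ i, z i - min (y i) (y' i) ≤ D)
    (U : Set (Fin M → ℝ)) (hU : MeasurableSet U) (hUfin : volume U < ⊤) :
    (volume (U ∪ Set.Icc y z)).toReal - (volume (U ∪ Set.Icc y' z)).toReal ≤
      D ^ (M - 1) * ∑ i, |y i - y' i| := by
  set A := Set.Icc y z with hA
  set B := Set.Icc y' z with hB
  set w : Fin M → ℝ := fun i => max (y i) (y' i) with hw
  have hwz : w ≤ z := fun i => max_le (hy i) (hy' i)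
  have hyz : y ≤ z := hy
  have hAB : A ∩ B = Set.Icc w z := by
    rw [hA, hB, Set.Icc_inter_Icc, inf_idem]
    rfl
  have hAfin : volume A < ⊤ := by
    rw [hA, Real.volume_Icc_pi]
    exact ENNReal.prod_lt_top (fun i _ => ENNReal.ofReal_lt_top)
  have hBfin : volume B < ⊤ := by
    rw [hB, Real.volume_Icc_pi]
    exact ENNReal.prod_lt_top (fun i _ => ENNReal.ofReal_lt_top)
  have hUA : volume (U ∪ A) < ⊤ :=
    lt_of_le_of_lt (measure_union_le _ _) (ENNReal.add_lt_top.2 ⟨hUfin, hAfin⟩)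
  have hUB : volume (U ∪ B) < ⊤ :=
    lt_of_le_of_lt (measure_union_le _ _) (ENNReal.add_lt_top.2 ⟨hUfin, hBfin⟩)
  have hdiff_fin : volume (A \ B) < ⊤ :=
    lt_of_le_of_lt (measure_mono Set.diff_subset) hAfin
  -- step 1 : λ(U∪A) ≤ λ(U∪B) + λ(A\B)
  have step1 : volume (U ∪ A) ≤ volume (U ∪ B) + volume (A \ B) := by
    refine le_trans (measure_mono ?_) (measure_union_le _ _)
    intro x hx
    rcases hx with hx | hx
    · exact Or.inl (Or.inl hx)
    · by_cases hxB : x ∈ B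
      · exact Or.inl (Or.inr hxB)
      · exact Or.inr ⟨hx, hxB⟩
  have step1' : (volume (U ∪ A)).toReal ≤ (volume (U ∪ B)).toReal + (volume (A \ B)).toReal := by
    rw [← ENNReal.toReal_add hUB.ne hdiff_fin.ne]
    exact ENNReal.toReal_mono (ENNReal.add_ne_top.2 ⟨hUB.ne, hdiff_fin.ne⟩) step1
  -- step 2 : λ(A\B) = λ(A) - λ(A∩B)
  have hABmeas : MeasurableSet (A ∩ B) := (measurableSet_Icc).inter measurableSet_Icc
  have step2 : (volume (A \ B)).toReal = (volume A).toReal - (volume (A ∩ B)).toReal := by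
    have : A \ B = A \ (A ∩ B) := (Set.diff_self_inter).symm
    rw [this, measure_diff Set.inter_subset_left hABmeas.nullMeasurableSet
      (lt_of_le_of_lt (measure_mono Set.inter_subset_left) hAfin).ne,
      ENNReal.toReal_sub_of_le (measure_mono Set.inter_subset_left) hAfin.ne]
  -- step 3 : compute volumes
  have hvolA : (volume A).toReal = ∏ i, (z i - y i) := Real.volume_Icc_pi_toReal hyz
  have hvolAB : (volume (A ∩ B)).toReal = ∏ i, (z i - w i) := by
    rw [hAB]; exact Real.volume_Icc_pi_toReal hwz
  -- step 4 : product estimate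
  have step4 : ∏ i, (z i - y i) - ∏ i, (z i - w i) ≤ D ^ (M - 1) * ∑ i, |y i - y' i| := by
    have huniv : (Finset.univ : Finset (Fin M)).Nonempty := by
      refine Finset.univ_nonempty_iff.2 ?_
      exact Fin.pos_iff_nonempty.mp hM
    have hcard : (Finset.univ : Finset (Fin M)).card = M := Finset.card_univ.trans (Fintype.card_fin M)
    have h := prod_sub_prod_le_aux D hD (fun i => z i - y i) (fun i => z i - w i)
      (fun i => sub_nonneg.2 (hwz i))
      (fun i => sub_le_sub_left (le_max_left (y i) (y' i)) (z i))
      (fun i => le_trans (by rw [sub_le_sub_iff_left]; exact min_le_left _ _) (hside i))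
      Finset.univ huniv
    rw [hcard] at h
    refine le_trans h ?_
    apply mul_le_mul_of_nonneg_left _ (pow_nonneg hD _)
    apply Finset.sum_le_sum
    intro i _
    have : (z i - y i) - (z i - w i) = w i - y i := by ring
    rw [this]
    have hwi : w i = max (y i) (y' i) := rfl
    rw [hwi]
    rcases le_total (y i) (y' i) with h' | h'
    · rw [max_eq_right h', abs_sub_comm]; exact le_abs_self _
    · rw [max_eq_left h']; simp [abs_nonneg]
  linarith [step1', step2, hvolA, hvolAB, step4]

/-- Hypervolume Lipschitz property: for boxes `[y,z]` and `[y',z]` with side lengths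
bounded by `D`, and any measurable set `U` of finite Lebesgue measure,
`|λ(U ∪ [y,z]) - λ(U ∪ [y',z])| ≤ D^{M-1} · ∑ |y_i - y'_i|`. -/
theorem hypervolume_lipschitz
    (M : ℕ) (hM : 1 ≤ M) (D : ℝ) (hD : 0 ≤ D)
    (y y' z : Fin M → ℝ)
    (hy : ∀ i, y i ≤ z i) (hy' : ∀ i, y' i ≤ z i)
    (hside : ∀ i, z i - min (y i) (y' i) ≤ D)
    (U : Set (Fin M → ℝ)) (hU : MeasurableSet U) (hUfin : volume U < ⊤) :
    |(volume (U ∪ Set.Icc y z)).toReal - (volume (U ∪ Set.Icc y' z)).toReal| ≤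
      D ^ (M - 1) * ∑ i, |y i - y' i| := by
  rw [abs_sub_le_iff]
  constructor
  · exact hypervolume_lipschitz_one_side M hM D hD y y' z hy hy' hside U hU hUfin
  · have h := hypervolume_lipschitz_one_side M hM D hD y' y z hy' hy
      (fun i => by rw [min_comm]; exact hside i) U hU hUfin
    refine le_trans h (le_of_eq ?_)
    congr 1
    exact Finset.sum_congr rfl (fun i _ => abs_sub_comm _ _)
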